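/- arXiv:2002.03174 — 5 statements merged into one kernel-verified Lean document; each statement's English description precedes it below -/
import Mathlib

section
/- Let n agents have single-peaked value densities on [0,1] with a common slope k, pairwise distinct peaks, supports whose union is [0,1], and normalized total value 1 each. If an allocation X is Pareto optimal, then X is non-wasteful and is (up to null sets) a connected, peak-preserving allocation: the agents' pieces are intervals ordered along [0,1] in the order of the agents' peaks. -/
open MeasureTheory

noncomputable def pieceVal (v : ℝ → ℝ) (P : Set ℝ) : ℝ := ∫ x in P, v x

def IsAlloc {n : ℕ} (X : Fin n → Set ℝ) : Prop :=
  (∀ i, MeasurableSet (X i)) ∧ (∀ i j, i ≠ j → X i ∩ X j = ∅) ∧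
    (⋃ i, X i) = Set.Icc (0:ℝ) 1

def Dominates {n : ℕ} (v : Fin n → ℝ → ℝ) (Y X : Fin n → Set ℝ) : Prop :=
  (∀ i, pieceVal (v i) (X i) ≤ pieceVal (v i) (Y i)) ∧
    ∃ i, pieceVal (v i) (X i) < pieceVal (v i) (Y i)

def ParetoOpt {n : ℕ} (v : Fin n → ℝ → ℝ) (X : Fin n → Set ℝ) : Prop :=
  ¬ ∃ Y, IsAlloc Y ∧ Dominates v Y X

def Supp01 (v : ℝ → ℝ) : Set ℝ := {x ∈ Set.Icc (0:ℝ) 1 | 0 < v x}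

def SinglePeakedD (v : ℝ → ℝ) (p k : ℝ) : Prop :=
  0 < k ∧ p ∈ Set.Icc (0:ℝ) 1 ∧
    (∀ x ∈ Set.Icc (0:ℝ) 1, v x = max 0 (v p - k * |x - p|)) ∧
    (∫ x in Set.Icc (0:ℝ) 1, v x) = 1

def NonWasteful {n : ℕ} (v : Fin n → ℝ → ℝ) (X : Fin n → Set ℝ) : Prop :=
  ∀ i, volume (X i \ Supp01 (v i)) = 0

def ConnPeakPres {n : ℕ} (p : Fin n → ℝ) (X : Fin n → Set ℝ) : Prop :=
  ∃ (c : Fin (n+1) → ℝ) (σ : Equiv.Perm (Fin n)),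
    Monotone c ∧ c 0 = 0 ∧ c (Fin.last n) = 1 ∧
    StrictMono (fun i => p (σ i)) ∧
    ∀ i : Fin n, X (σ i) =ᵐ[volume] Set.Ioc (c i.castSucc) (c i.succ)

def EnvyFreeA {n : ℕ} (v : Fin n → ℝ → ℝ) (X : Fin n → Set ℝ) : Prop :=
  ∀ i j, pieceVal (v i) (X j) ≤ pieceVal (v i) (X i)

/-!
Pareto optimality is tested by exchanges: if agent `i` can trade a part `A` of its share for a
part `B` of agent `j`'s share with `Vᵢ(A) ≤ Vᵢ(B)` and `Vⱼ(B) < Vⱼ(A)`, the allocation is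
dominated. Waste is handed to an agent who values it.

Two tents of unit mass with a common slope and peaks `pᵢ < pⱼ` cannot dominate each other, so
both ends of the support of `vᵢ` lie to the left of those of `vⱼ`; on the overlap of the supports
the ratio `vⱼ / vᵢ` is then strictly increasing. If `i` held mass to the right of a point `t`
while `j` held mass to its left, pieces of equal `vᵢ`-value cut from the two sides would give a
profitable exchange. So, sorted by peaks, the shares are ordered up to null sets, and such an
allocation is a.e. a sequence of consecutive intervals whose cut points are the measures of the
unions of the first `m` shares.
-/

open Set

noncomputable def tent (h p k x : ℝ) : ℝ := max 0 (h - k * |x - p|)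

lemma continuous_tent (h p k : ℝ) : Continuous (tent h p k) := by
  unfold tent; fun_prop

lemma tent_pos_iff {h p k x : ℝ} (hk : 0 ≤ k) :
    0 < tent h p k x ↔ k * p - h < k * x ∧ k * x < k * p + h := by
  rw [tent, lt_max_iff, ← abs_of_nonneg hk, ← abs_mul, abs_of_nonneg hk, mul_sub]
  simp only [lt_irrefl, false_or, sub_pos, abs_sub_lt_iff]
  constructor <;> intro h <;> constructor <;> linarith [h.1, h.2]

lemma tent_eq_min_of_pos {h p k x : ℝ} (hk : 0 ≤ k) (hpos : 0 < tent h p k x) :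
    tent h p k x = min (k * x - (k * p - h)) (k * p + h - k * x) := by
  have hmax : tent h p k x = h - k * |x - p| := max_eq_right (by
    rw [tent, lt_max_iff] at hpos; rcases hpos with h0 | h0 <;> linarith)
  rw [hmax]
  rcases le_total x p with hxp | hxp
  · rw [abs_of_nonpos (sub_nonpos.2 hxp), min_eq_left (by nlinarith)]; ring
  · rw [abs_of_nonneg (sub_nonneg.2 hxp), min_eq_right (by nlinarith)]; ring

lemma min_mul_min_lt_min_mul_min {a a' b b' x y : ℝ} (ha : a < a') (hb : b < b')
    (hxy : x < y) (hx : a' < x) (hy : y < b) :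
    min (y - a) (b - y) * min (x - a') (b' - x) < min (x - a) (b - x) * min (y - a') (b' - y) := by
  have hm₁ : 0 < min (y - a) (b - y) := lt_min (by linarith) (by linarith)
  have hm₂ : 0 < min (x - a') (b' - x) := lt_min (by linarith) (by linarith)
  have h₁ := min_le_left (y - a) (b - y)
  have h₂ := min_le_right (y - a) (b - y)
  have h₃ := min_le_left (x - a') (b' - x)
  have h₄ := min_le_right (x - a') (b' - x)
  rcases min_cases (x - a) (b - x) with ⟨e₁, -⟩ | ⟨e₁, -⟩ <;>
    rcases min_cases (y - a') (b' - y) with ⟨e₂, -⟩ | ⟨e₂, -⟩ <;> rw [e₁, e₂]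
  · nlinarith [mul_le_mul h₁ h₃ hm₂.le (by linarith)]
  · nlinarith [mul_le_mul h₂ h₃ hm₂.le (by linarith)]
  · nlinarith [mul_le_mul h₂ h₃ hm₂.le (by linarith)]
  · nlinarith [mul_le_mul h₂ h₄ hm₂.le (by linarith)]

lemma tent_mul_tent_lt {h h' p p' k x y : ℝ} (hk : 0 < k)
    (hl : k * p - h < k * p' - h') (hr : k * p + h < k * p' + h') (hxy : x < y)
    (hx : 0 < tent h' p' k x) (hy : 0 < tent h p k y) :
    tent h p k y * tent h' p' k x < tent h p k x * tent h' p' k y := by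
  have hkxy : k * x < k * y := mul_lt_mul_of_pos_left hxy hk
  rw [tent_pos_iff hk.le] at hx hy
  have hx' : 0 < tent h p k x := (tent_pos_iff hk.le).2 ⟨by linarith, by linarith⟩
  have hy' : 0 < tent h' p' k y := (tent_pos_iff hk.le).2 ⟨by linarith, by linarith⟩
  rw [tent_eq_min_of_pos hk.le hx', tent_eq_min_of_pos hk.le hy',
    tent_eq_min_of_pos hk.le ((tent_pos_iff hk.le).2 hx),
    tent_eq_min_of_pos hk.le ((tent_pos_iff hk.le).2 hy)]
  exact min_mul_min_lt_min_mul_min hl hr hkxy hx.1 hy.2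

lemma tent_pos_of_le_of_le {h h' p p' k x y z : ℝ} (hk : 0 ≤ k)
    (hl : k * p - h < k * p' - h') (hr : k * p + h < k * p' + h') (hxz : x ≤ z) (hzy : z ≤ y)
    (hx : 0 < tent h' p' k x) (hy : 0 < tent h p k y) :
    0 < tent h p k z ∧ 0 < tent h' p' k z := by
  simp only [tent_pos_iff hk] at hx hy ⊢
  have := mul_le_mul_of_nonneg_left hxz hk
  have := mul_le_mul_of_nonneg_left hzy hk
  exact ⟨⟨by linarith, by linarith⟩, by linarith, by linarith⟩

lemma setIntegral_tent_lt {h h' p q k : ℝ} (hk : 0 < k) (hh : 0 < h) (hp : p ∈ Icc (0:ℝ) 1)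
    (hpq : p ≠ q) (hle : h' + k * |p - q| ≤ h) :
    ∫ x in Icc (0:ℝ) 1, tent h' q k x < ∫ x in Icc (0:ℝ) 1, tent h p k x := by
  have hpq' : 0 < k * |p - q| := mul_pos hk (abs_pos.2 (sub_ne_zero.2 hpq))
  have hdom : ∀ x, tent h' q k x ≤ tent h p k x := fun x => by
    refine max_le_max le_rfl ?_
    have := abs_sub_le x q p
    rw [abs_sub_comm q p] at this
    nlinarith
  have hpeak : tent h' q k p < tent h p k p := by
    rw [tent, tent, sub_self, abs_zero, mul_zero, sub_zero, max_eq_right hh.le]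
    exact max_lt hh (by linarith)
  simp only [integral_Icc_eq_integral_Ioc, ← intervalIntegral.integral_of_le zero_le_one]
  exact intervalIntegral.integral_lt_integral_of_continuousOn_of_le_of_exists_lt one_pos
    (continuous_tent _ _ _).continuousOn (continuous_tent _ _ _).continuousOn
    (fun x _ => hdom x) ⟨p, hp, hpeak⟩

namespace SinglePeakedD

variable {v w : ℝ → ℝ} {p q k : ℝ}

lemma eqOn_tent (hv : SinglePeakedD v p k) : EqOn v (tent (v p) p k) (Icc 0 1) := hv.2.2.1

lemma setIntegral_tent (hv : SinglePeakedD v p k) :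
    ∫ x in Icc (0:ℝ) 1, tent (v p) p k x = 1 := by
  rw [← setIntegral_congr_fun measurableSet_Icc hv.eqOn_tent]
  exact hv.2.2.2

lemma integrableOn (hv : SinglePeakedD v p k) : IntegrableOn v (Icc 0 1) :=
  (continuous_tent _ _ _).integrableOn_Icc.congr_fun hv.eqOn_tent.symm measurableSet_Icc

lemma peak_pos (hv : SinglePeakedD v p k) : 0 < v p := by
  by_contra! hp
  have hzero : ∀ x, tent (v p) p k x = 0 := fun x =>
    max_eq_left (by nlinarith [abs_nonneg (x - p), hv.1])
  have := hv.setIntegral_tent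
  simp only [hzero, integral_zero] at this
  exact zero_ne_one this

lemma measurableSet_supp01 (hv : SinglePeakedD v p k) : MeasurableSet (Supp01 v) := by
  have : Supp01 v = Icc 0 1 ∩ tent (v p) p k ⁻¹' Ioi 0 := by
    ext x
    simp only [Supp01, mem_sep_iff, mem_inter_iff, mem_preimage, mem_Ioi]
    exact and_congr_right fun hx => by rw [hv.eqOn_tent hx]
  rw [this]
  exact measurableSet_Icc.inter ((continuous_tent _ _ _).measurable measurableSet_Ioi)

lemma peak_lt_peak_add (hv : SinglePeakedD v p k) (hw : SinglePeakedD w q k) (hpq : p ≠ q) :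
    v p < w q + k * |p - q| := by
  by_contra! hle
  have := setIntegral_tent_lt hv.1 hv.peak_pos hv.2.1 hpq hle
  rw [hv.setIntegral_tent, hw.setIntegral_tent] at this
  exact lt_irrefl _ this

lemma ends_lt (hv : SinglePeakedD v p k) (hw : SinglePeakedD w q k) (hpq : p < q) :
    k * p - v p < k * q - w q ∧ k * p + v p < k * q + w q := by
  have h₁ := hv.peak_lt_peak_add hw hpq.ne
  have h₂ := hw.peak_lt_peak_add hv hpq.ne'
  rw [abs_of_neg (sub_neg.2 hpq)] at h₁
  rw [abs_of_pos (sub_pos.2 hpq)] at h₂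
  constructor <;> linarith

lemma mul_lt_mul_of_peak_lt (hv : SinglePeakedD v p k) (hw : SinglePeakedD w q k) (hpq : p < q)
    {x y : ℝ} (hx : x ∈ Icc (0:ℝ) 1) (hy : y ∈ Icc (0:ℝ) 1) (hxy : x < y)
    (hwx : 0 < w x) (hvy : 0 < v y) : v y * w x < v x * w y := by
  obtain ⟨hl, hr⟩ := hv.ends_lt hw hpq
  rw [hw.eqOn_tent hx] at hwx
  rw [hv.eqOn_tent hy] at hvy
  rw [hv.eqOn_tent hx, hv.eqOn_tent hy, hw.eqOn_tent hx, hw.eqOn_tent hy]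
  exact tent_mul_tent_lt hv.1 hl hr hxy hwx hvy

lemma pos_of_le_of_le (hv : SinglePeakedD v p k) (hw : SinglePeakedD w q k) (hpq : p < q)
    {x y z : ℝ} (hx : x ∈ Icc (0:ℝ) 1) (hy : y ∈ Icc (0:ℝ) 1) (hxz : x ≤ z) (hzy : z ≤ y)
    (hwx : 0 < w x) (hvy : 0 < v y) : 0 < v z ∧ 0 < w z := by
  obtain ⟨hl, hr⟩ := hv.ends_lt hw hpq
  have hz : z ∈ Icc (0:ℝ) 1 := ⟨hx.1.trans hxz, hzy.trans hy.2⟩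
  rw [hw.eqOn_tent hx] at hwx
  rw [hv.eqOn_tent hy] at hvy
  rw [hv.eqOn_tent hz, hw.eqOn_tent hz]
  exact tent_pos_of_le_of_le hv.1.le hl hr hxz hzy hwx hvy

end SinglePeakedD

lemma setIntegral_pos_of_pos {f : ℝ → ℝ} {S : Set ℝ} (hS : MeasurableSet S)
    (hS0 : volume S ≠ 0) (hf : IntegrableOn f S) (hpos : ∀ x ∈ S, 0 < f x) :
    0 < ∫ x in S, f x := by
  rw [setIntegral_pos_iff_support_of_nonneg_ae
    ((ae_restrict_iff' hS).2 (Filter.Eventually.of_forall fun x hx => (hpos x hx).le)) hf]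
  exact (pos_iff_ne_zero.2 hS0).trans_le
    (measure_mono fun x hx => ⟨(hpos x hx).ne', hx⟩)

lemma measure_ne_zero_of_setIntegral_pos {f : ℝ → ℝ} {S : Set ℝ}
    (hf : 0 < ∫ x in S, f x) : volume S ≠ 0 := fun h0 => by
  simp [Measure.restrict_eq_zero.2 h0] at hf

lemma exists_subset_setIntegral_eq {f : ℝ → ℝ} {S : Set ℝ} {a b m : ℝ} (hab : a ≤ b)
    (hS : MeasurableSet S) (hSab : S ⊆ Icc a b) (hf : IntegrableOn f S)
    (hm : m ∈ Icc 0 (∫ x in S, f x)) :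
    ∃ S' ⊆ S, MeasurableSet S' ∧ ∫ x in S', f x = m := by
  have hfi : Integrable (S.indicator f) := (integrable_indicator_iff hS).2 hf
  set F : ℝ → ℝ := fun s => ∫ x in a..s, S.indicator f x
  have hF : ∀ s, a ≤ s → F s = ∫ x in Ioc a s ∩ S, f x := fun s hs => by
    simp only [F, intervalIntegral.integral_of_le hs, setIntegral_indicator hS]
  have hFb : F b = ∫ x in S, f x := by
    rw [hF b hab]
    refine setIntegral_congr_set ?_
    have := (Ioc_ae_eq_Icc (μ := volume) (a := a) (b := b)).inter (Filter.EventuallyEq.refl _ S)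
    rwa [inter_eq_right.2 hSab] at this
  have hFa : F a = 0 := intervalIntegral.integral_same
  obtain ⟨s, hs, hFs⟩ := intermediate_value_Icc hab
    (intervalIntegral.continuous_primitive (fun _ _ => hfi.intervalIntegrable) a).continuousOn
    (show m ∈ Icc (F a) (F b) by rwa [hFa, hFb])
  exact ⟨Ioc a s ∩ S, inter_subset_right, measurableSet_Ioc.inter hS, (hF s hs.1).symm.trans hFs⟩

lemma exists_subsets_setIntegral_eq {f : ℝ → ℝ} {A B : Set ℝ} {a b : ℝ} (hab : a ≤ b)
    (hA : MeasurableSet A) (hB : MeasurableSet B) (hAab : A ⊆ Icc a b) (hBab : B ⊆ Icc a b)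
    (hf : IntegrableOn f (Icc a b)) (hfA : 0 < ∫ x in A, f x) (hfB : 0 < ∫ x in B, f x) :
    ∃ A' ⊆ A, ∃ B' ⊆ B, MeasurableSet A' ∧ MeasurableSet B' ∧
      ∫ x in A', f x = ∫ x in B', f x ∧ 0 < ∫ x in A', f x := by
  rcases le_total (∫ x in A, f x) (∫ x in B, f x) with hle | hle
  · obtain ⟨B', hB'B, hB', hB'f⟩ :=
      exists_subset_setIntegral_eq hab hB hBab (hf.mono_set hBab) ⟨hfA.le, hle⟩
    exact ⟨A, subset_rfl, B', hB'B, hA, hB', hB'f.symm, hfA⟩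
  · obtain ⟨A', hA'A, hA', hA'f⟩ :=
      exists_subset_setIntegral_eq hab hA hAab (hf.mono_set hAab) ⟨hfB.le, hle⟩
    exact ⟨A', hA'A, B, subset_rfl, hA', hB, hA'f, hA'f ▸ hfB⟩

lemma pieceVal_ite_add_pieceVal {f : ℝ → ℝ} {s S T U : Set ℝ} (hf : IntegrableOn f s)
    (hS : MeasurableSet S) (hT : T ⊆ s) (hU : U ⊆ s) :
    pieceVal f (S.ite T U) + pieceVal f (U ∩ S) = pieceVal f U + pieceVal f (T ∩ S) := by
  simp only [pieceVal]
  rw [← integral_inter_add_sdiff hS (hf.mono_set ((Set.ite_subset_union _ _ _).trans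
    (union_subset hT hU))), Set.ite_inter_self, Set.ite_sdiff_self,
    ← integral_inter_add_sdiff hS (hf.mono_set hU)]
  ring

namespace IsAlloc

variable {n : ℕ} {X Y : Fin n → Set ℝ}

lemma subset_Icc (hX : IsAlloc X) (i : Fin n) : X i ⊆ Icc 0 1 :=
  hX.2.2 ▸ subset_iUnion X i

lemma comp_perm (hX : IsAlloc X) (τ : Equiv.Perm (Fin n)) : IsAlloc (X ∘ τ) :=
  ⟨fun _ => hX.1 _, fun _ _ hij => hX.2.1 _ _ (τ.injective.ne hij),
    (τ.surjective.iUnion_comp X).trans hX.2.2⟩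

lemma ite (hX : IsAlloc X) (hY : IsAlloc Y) {S : Set ℝ} (hS : MeasurableSet S) :
    IsAlloc fun i => S.ite (Y i) (X i) := by
  refine ⟨fun i => hS.ite (hY.1 i) (hX.1 i), fun i j hij => ?_, ?_⟩
  · rw [← Set.ite_inter_inter, hX.2.1 i j hij, hY.2.1 i j hij, Set.ite_same]
  · simp only [Set.ite, iUnion_union_distrib, ← iUnion_inter, ← iUnion_sdiff, hX.2.2, hY.2.2]
    exact Set.ite_same _ _

lemma not_paretoOpt_of_exchange {v : Fin n → ℝ → ℝ} (hX : IsAlloc X) {i j : Fin n} (hij : i ≠ j)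
    (hvi : IntegrableOn (v i) (Icc 0 1)) (hvj : IntegrableOn (v j) (Icc 0 1))
    {A B : Set ℝ} (hA : MeasurableSet A) (hB : MeasurableSet B) (hAX : A ⊆ X i) (hBX : B ⊆ X j)
    (hi : pieceVal (v i) A ≤ pieceVal (v i) B) (hj : pieceVal (v j) B < pieceVal (v j) A) :
    ¬ ParetoOpt v X := by
  set S := A ∪ B
  have hS : MeasurableSet S := hA.union hB
  -- `i` and `j` swap their shares inside `S`.
  set Y : Fin n → Set ℝ := fun l => S.ite (X (Equiv.swap i j l)) (X l)
  have hXiS : X i ∩ S = A := by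
    have : X i ∩ B = ∅ := subset_empty_iff.1 (hX.2.1 i j hij ▸ inter_subset_inter_right _ hBX)
    rw [inter_union_distrib_left, inter_eq_right.2 hAX, this, union_empty]
  have hXjS : X j ∩ S = B := by
    have : X j ∩ A = ∅ :=
      subset_empty_iff.1 (hX.2.1 j i hij.symm ▸ inter_subset_inter_right _ hAX)
    rw [inter_union_distrib_left, inter_eq_right.2 hBX, this, empty_union]
  refine fun hPO => hPO ⟨Y, hX.ite (hX.comp_perm _) hS, ⟨fun l => ?_, j, ?_⟩⟩
  · rcases eq_or_ne l i with rfl | hli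
    · have := pieceVal_ite_add_pieceVal hvi hS (hX.subset_Icc j) (hX.subset_Icc l)
      simp only [Y, Equiv.swap_apply_left, hXiS, hXjS] at this ⊢
      linarith
    rcases eq_or_ne l j with rfl | hlj
    · have := pieceVal_ite_add_pieceVal hvj hS (hX.subset_Icc i) (hX.subset_Icc l)
      simp only [Y, Equiv.swap_apply_right, hXiS, hXjS] at this ⊢
      linarith
    · simp only [Y, Equiv.swap_apply_of_ne_of_ne hli hlj, Set.ite_same, le_rfl]
  · have := pieceVal_ite_add_pieceVal hvj hS (hX.subset_Icc i) (hX.subset_Icc j)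
    simp only [Y, Equiv.swap_apply_right, hXiS, hXjS] at this ⊢
    linarith

lemma not_paretoOpt_of_ratio {v : Fin n → ℝ → ℝ} (hX : IsAlloc X) {i j : Fin n} (hij : i ≠ j)
    (hvi : IntegrableOn (v i) (Icc 0 1)) (hvj : IntegrableOn (v j) (Icc 0 1))
    {A B : Set ℝ} (hA : MeasurableSet A) (hB : MeasurableSet B) (hAX : A ⊆ X i) (hBX : B ⊆ X j)
    (hA0 : volume A ≠ 0) (hB0 : volume B ≠ 0)
    (hviA : ∀ x ∈ A, 0 < v i x) (hviB : ∀ x ∈ B, 0 < v i x) (r : ℝ)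
    (hrA : ∀ x ∈ A, r * v i x < v j x) (hrB : ∀ x ∈ B, v j x < r * v i x) :
    ¬ ParetoOpt v X := by
  have hA1 := hAX.trans (hX.subset_Icc i)
  have hB1 := hBX.trans (hX.subset_Icc j)
  obtain ⟨A', hA'A, B', hB'B, hA', hB', heq, hpos⟩ := exists_subsets_setIntegral_eq zero_le_one
    hA hB hA1 hB1 hvi (setIntegral_pos_of_pos hA hA0 (hvi.mono_set hA1) hviA)
    (setIntegral_pos_of_pos hB hB0 (hvi.mono_set hB1) hviB)
  have hA'1 := hA'A.trans hA1
  have hB'1 := hB'B.trans hB1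
  have hA'0 := measure_ne_zero_of_setIntegral_pos hpos
  have hB'0 := measure_ne_zero_of_setIntegral_pos (heq ▸ hpos)
  have hgainA : 0 < ∫ x in A', (v j x - r * v i x) :=
    setIntegral_pos_of_pos hA' hA'0 ((hvj.mono_set hA'1).sub ((hvi.mono_set hA'1).const_mul r))
      fun x hx => sub_pos.2 (hrA x (hA'A hx))
  have hlossB : 0 < ∫ x in B', (r * v i x - v j x) :=
    setIntegral_pos_of_pos hB' hB'0 (((hvi.mono_set hB'1).const_mul r).sub (hvj.mono_set hB'1))
      fun x hx => sub_pos.2 (hrB x (hB'B hx))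
  rw [integral_sub (hvj.mono_set hA'1) ((hvi.mono_set hA'1).const_mul r), integral_const_mul,
    heq] at hgainA
  rw [integral_sub ((hvi.mono_set hB'1).const_mul r) (hvj.mono_set hB'1), integral_const_mul]
    at hlossB
  exact hX.not_paretoOpt_of_exchange hij hvi hvj hA' hB' (hA'A.trans hAX) (hB'B.trans hBX)
    heq.le (by unfold pieceVal; linarith)

end IsAlloc

def AEPrecedes (s t : Set ℝ) : Prop := ∀ c, volume (s ∩ Ioi c) = 0 ∨ volume (t ∩ Iio c) = 0

section ParetoOptimal

variable {n : ℕ} {v : Fin n → ℝ → ℝ} {p : Fin n → ℝ} {k : ℝ} {X : Fin n → Set ℝ}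

lemma IsAlloc.nonWasteful_of_paretoOpt (hX : IsAlloc X) (hsp : ∀ i, SinglePeakedD (v i) (p i) k)
    (hcover : (⋃ i, Supp01 (v i)) = Icc (0:ℝ) 1) (hPO : ParetoOpt v X) : NonWasteful v X := by
  intro i
  by_contra hW
  set W := X i \ Supp01 (v i)
  obtain ⟨l, hl⟩ : ∃ l, volume (W ∩ Supp01 (v l)) ≠ 0 := by
    by_contra! h
    refine hW (measure_mono_null (fun x hx => ?_) (measure_iUnion_null h))
    obtain ⟨l, hxl⟩ := mem_iUnion.1 (hcover ▸ hX.subset_Icc i hx.1 : x ∈ ⋃ l, Supp01 (v l))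
    exact mem_iUnion.2 ⟨l, hx, hxl⟩
  have hli : i ≠ l := by
    rintro rfl
    exact hl (by simp [W])
  have hG : MeasurableSet (W ∩ Supp01 (v l)) :=
    ((hX.1 i).diff (hsp i).measurableSet_supp01).inter (hsp l).measurableSet_supp01
  refine hX.not_paretoOpt_of_exchange hli (hsp i).integrableOn (hsp l).integrableOn hG
    MeasurableSet.empty (fun x hx => hx.1.1) (empty_subset _) ?_ ?_ hPO
  · simp only [pieceVal, Measure.restrict_empty, integral_zero_measure]
    exact setIntegral_nonpos hG fun x hx => not_lt.1 fun hpos => hx.1.2 ⟨hx.2.1, hpos⟩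
  · simp only [pieceVal, Measure.restrict_empty, integral_zero_measure]
    exact setIntegral_pos_of_pos hG hl ((hsp l).integrableOn.mono_set fun x hx => hx.2.1)
      fun x hx => hx.2.2

lemma NonWasteful.measure_inter_supp01 (hNW : NonWasteful v X)
    (hsp : ∀ i, SinglePeakedD (v i) (p i) k) {i : Fin n} {P : Set ℝ} (hP : P ⊆ X i) :
    volume (P ∩ Supp01 (v i)) = volume P := by
  rw [← measure_inter_add_sdiff P (hsp i).measurableSet_supp01,
    measure_mono_null (sdiff_subset_sdiff_left hP) (hNW i), add_zero]

lemma ParetoOpt.aePrecedes (hPO : ParetoOpt v X) (hX : IsAlloc X)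
    (hsp : ∀ i, SinglePeakedD (v i) (p i) k) (hNW : NonWasteful v X) {i j : Fin n}
    (hij : p i < p j) : AEPrecedes (X i) (X j) := by
  intro t
  by_contra! h
  obtain ⟨hA0, hB0⟩ := h
  rw [← hNW.measure_inter_supp01 hsp inter_subset_left] at hA0 hB0
  set A := X i ∩ Ioi t ∩ Supp01 (v i)
  set B := X j ∩ Iio t ∩ Supp01 (v j)
  obtain ⟨a, ha⟩ := nonempty_of_measure_ne_zero hA0
  obtain ⟨b, hb⟩ := nonempty_of_measure_ne_zero hB0
  have ht : t ∈ Icc (0:ℝ) 1 := ⟨hb.2.1.1.trans hb.1.2.le, ha.1.2.le.trans ha.2.1.2⟩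
  have hoverlap : ∀ {x}, x ∈ Icc (0:ℝ) 1 → x ≤ t → 0 < v j x → 0 < v i x ∧ 0 < v j x :=
    fun hx hxt hjx => (hsp i).pos_of_le_of_le (hsp j) hij hx ha.2.1 le_rfl
      (hxt.trans ha.1.2.le) hjx ha.2.2
  obtain ⟨hit, hjt⟩ := hoverlap ht le_rfl ((hsp i).pos_of_le_of_le (hsp j) hij hb.2.1 ha.2.1
    hb.1.2.le ha.1.2.le hb.2.2 ha.2.2).2
  -- On the overlap of the supports `v j / v i` increases, so it exceeds its value at `t` on `A`
  -- and stays below it on `B`.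
  refine hX.not_paretoOpt_of_ratio (hij.ne ∘ congrArg p) (hsp i).integrableOn (hsp j).integrableOn
    (((hX.1 i).inter measurableSet_Ioi).inter (hsp i).measurableSet_supp01)
    (((hX.1 j).inter measurableSet_Iio).inter (hsp j).measurableSet_supp01)
    (fun x hx => hx.1.1) (fun x hx => hx.1.1) hA0 hB0 (fun x hx => hx.2.2)
    (fun x hx => (hoverlap hx.2.1 hx.1.2.le hx.2.2).1) (v j t / v i t) (fun x hx => ?_)
    (fun x hx => ?_) hPO
  · rw [div_mul_eq_mul_div, div_lt_iff₀ hit]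
    have := (hsp i).mul_lt_mul_of_peak_lt (hsp j) hij ht hx.2.1 hx.1.2 hjt hx.2.2
    linarith
  · rw [div_mul_eq_mul_div, lt_div_iff₀ hit]
    have := (hsp i).mul_lt_mul_of_peak_lt (hsp j) hij hx.2.1 ht hx.1.2 hx.2.2 hit
    linarith

end ParetoOptimal

section Cuts

variable {n : ℕ} {a : Fin n → Set ℝ}

def prefixUnion (a : Fin n → Set ℝ) (m : ℕ) : Set ℝ := ⋃ (l : Fin n) (_ : (l : ℕ) < m), a l

noncomputable def cutPoint (a : Fin n → Set ℝ) (m : ℕ) : ℝ := (volume (prefixUnion a m)).toReal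

lemma mem_prefixUnion {m : ℕ} {x : ℝ} :
    x ∈ prefixUnion a m ↔ ∃ l : Fin n, (l : ℕ) < m ∧ x ∈ a l := by
  simp [prefixUnion]

lemma prefixUnion_mono : Monotone (prefixUnion a) := fun _ _ h _ hx =>
  let ⟨l, hl, hxl⟩ := mem_prefixUnion.1 hx
  mem_prefixUnion.2 ⟨l, hl.trans_le h, hxl⟩

lemma prefixUnion_zero : prefixUnion a 0 = ∅ := by simp [prefixUnion]

lemma prefixUnion_self : prefixUnion a n = ⋃ l, a l := by simp [prefixUnion]

lemma cutPoint_zero : cutPoint a 0 = 0 := by simp [cutPoint, prefixUnion_zero]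

namespace IsAlloc

lemma measurableSet_prefixUnion (ha : IsAlloc a) (m : ℕ) : MeasurableSet (prefixUnion a m) :=
  MeasurableSet.iUnion fun l => MeasurableSet.iUnion fun _ => ha.1 l

lemma prefixUnion_subset_Icc (ha : IsAlloc a) (m : ℕ) : prefixUnion a m ⊆ Icc 0 1 :=
  iUnion₂_subset fun l _ => ha.subset_Icc l

lemma prefixUnion_succ_sdiff (ha : IsAlloc a) (l : Fin n) :
    prefixUnion a (l + 1) \ prefixUnion a l = a l := by
  ext x
  simp only [mem_sdiff, mem_prefixUnion]
  constructor
  · rintro ⟨⟨l', hl', hx⟩, hnot⟩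
    rcases (Nat.lt_succ_iff.1 hl').lt_or_eq with h | h
    · exact absurd ⟨l', h, hx⟩ hnot
    · rwa [← Fin.ext h]
  · exact fun hx => ⟨⟨l, Nat.lt_succ_self _, hx⟩, fun ⟨l', hl', hx'⟩ =>
      eq_empty_iff_forall_notMem.1 (ha.2.1 l' l (Fin.ne_of_val_ne hl'.ne)) x ⟨hx', hx⟩⟩

lemma volume_prefixUnion (ha : IsAlloc a) (m : ℕ) :
    volume (prefixUnion a m) = ENNReal.ofReal (cutPoint a m) :=
  (ENNReal.ofReal_toReal (ne_top_of_le_ne_top measure_Icc_lt_top.ne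
    (measure_mono (ha.prefixUnion_subset_Icc m)))).symm

lemma cutPoint_le_one (ha : IsAlloc a) (m : ℕ) : cutPoint a m ≤ 1 :=
  ENNReal.toReal_le_of_le_ofReal zero_le_one
    ((measure_mono (ha.prefixUnion_subset_Icc m)).trans (by simp [Real.volume_Icc]))

lemma monotone_cutPoint (ha : IsAlloc a) : Monotone (cutPoint a) := fun _ m h =>
  ENNReal.toReal_mono (ha.volume_prefixUnion m ▸ ENNReal.ofReal_ne_top)
    (measure_mono (prefixUnion_mono h))

lemma cutPoint_self (ha : IsAlloc a) : cutPoint a n = 1 := by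
  simp [cutPoint, prefixUnion_self, ha.2.2, Real.volume_Icc]

lemma measure_prefixUnion_inter_Ioi (ha : IsAlloc a)
    (hord : ∀ l l' : Fin n, l < l' → AEPrecedes (a l) (a l')) (m : ℕ) :
    volume (prefixUnion a m ∩ Ioi (cutPoint a m)) = 0 := by
  set D := prefixUnion a m
  set c := cutPoint a m
  by_contra h0
  obtain ⟨l, hlm, hl⟩ : ∃ l : Fin n, (l : ℕ) < m ∧ volume (a l ∩ Ioi c) ≠ 0 := by
    by_contra! h
    refine h0 ?_
    simp only [D, prefixUnion, iUnion₂_inter]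
    exact measure_iUnion_null fun l => measure_iUnion_null (h l)
  -- `D` has measure `c` but mass above `c`, so it misses part of `[0, c)`.
  have hgap : volume (Ico 0 c \ D) ≠ 0 := by
    intro hgap
    have hle : ENNReal.ofReal c ≤ volume (D ∩ Iic c) := by
      have hsub : Ico 0 c \ (D ∩ Iic c) ⊆ Ico 0 c \ D :=
        fun x hx => ⟨hx.1, fun hxD => hx.2 ⟨hxD, hx.1.2.le⟩⟩
      simpa only [Real.volume_Ico, sub_zero] using
        measure_mono_ae (ae_le_set.2 (measure_mono_null hsub hgap))
    have hsplit := measure_inter_add_sdiff (μ := volume) D (measurableSet_Iic (a := c))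
    rw [sdiff_eq, compl_Iic, ha.volume_prefixUnion] at hsplit
    refine (ENNReal.lt_add_right (ENNReal.ofReal_ne_top (r := c)) h0).not_ge ?_
    calc ENNReal.ofReal c + volume (D ∩ Ioi c) ≤ volume (D ∩ Iic c) + volume (D ∩ Ioi c) :=
          by gcongr
      _ = ENNReal.ofReal c := hsplit
  obtain ⟨l', hml', hl'⟩ : ∃ l' : Fin n, m ≤ l' ∧ volume (a l' ∩ Iio c) ≠ 0 := by
    by_contra! h
    refine hgap (measure_mono_null (fun x hx => ?_)
      (measure_iUnion_null fun l' => measure_iUnion_null (h l')))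
    have hx01 : x ∈ ⋃ l, a l := ha.2.2 ▸ ⟨hx.1.1, hx.1.2.le.trans (ha.cutPoint_le_one m)⟩
    obtain ⟨l', hx'⟩ := mem_iUnion.1 hx01
    exact mem_iUnion₂.2
      ⟨l', not_lt.1 fun hl'm => hx.2 (mem_prefixUnion.2 ⟨l', hl'm, hx'⟩), hx', hx.1.2⟩
  rcases hord l l' (Fin.lt_def.2 (hlm.trans_le hml')) c with h | h
  exacts [hl h, hl' h]

lemma prefixUnion_ae_eq (ha : IsAlloc a)
    (hord : ∀ l l' : Fin n, l < l' → AEPrecedes (a l) (a l')) (m : ℕ) :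
    prefixUnion a m =ᵐ[volume] Ioc 0 (cutPoint a m) := by
  refine ae_eq_of_ae_subset_of_measure_ge (ae_le_set.2 (measure_mono_null (t := {0} ∪
    (prefixUnion a m ∩ Ioi (cutPoint a m))) (fun x hx => ?_)
    (measure_union_null Real.volume_singleton (ha.measure_prefixUnion_inter_Ioi hord m))))
    (by rw [Real.volume_Ioc, sub_zero, ha.volume_prefixUnion])
    (ha.measurableSet_prefixUnion m).nullMeasurableSet measure_Ioc_lt_top.ne
  have hx0 := (ha.prefixUnion_subset_Icc m hx.1).1
  rcases hx0.eq_or_lt with h | h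
  · exact Or.inl h.symm
  · exact Or.inr ⟨hx.1, not_le.1 fun hxc => hx.2 ⟨h, hxc⟩⟩

lemma exists_ae_eq_Ioc_of_aePrecedes (ha : IsAlloc a)
    (hord : ∀ l l' : Fin n, l < l' → AEPrecedes (a l) (a l')) :
    ∃ c : Fin (n + 1) → ℝ, Monotone c ∧ c 0 = 0 ∧ c (Fin.last n) = 1 ∧
      ∀ l : Fin n, a l =ᵐ[volume] Ioc (c l.castSucc) (c l.succ) := by
  refine ⟨fun m => cutPoint a m, fun m m' h => ha.monotone_cutPoint h, cutPoint_zero,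
    ha.cutPoint_self, fun l => ?_⟩
  have hc : 0 ≤ cutPoint a l := ENNReal.toReal_nonneg
  have := (ha.prefixUnion_ae_eq hord (l + 1)).diff (ha.prefixUnion_ae_eq hord l)
  rw [ha.prefixUnion_succ_sdiff] at this
  refine this.trans (Filter.EventuallyEq.of_eq (Set.ext fun x => ?_))
  simp only [Fin.val_succ, Fin.val_castSucc, mem_Ioc, mem_sdiff, not_and, not_le]
  exact ⟨fun hx => ⟨hx.2 hx.1.1, hx.1.2⟩, fun hx => ⟨⟨hc.trans_lt hx.1, hx.2⟩, fun _ => hx.1⟩⟩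

end IsAlloc

end Cuts

/-- Necessity: a Pareto optimal allocation is non-wasteful and is (up to null sets)
a connected, peak-preserving allocation. -/
theorem statement1 {n : ℕ} (v : Fin n → ℝ → ℝ) (p : Fin n → ℝ) (k : ℝ)
    (hsp : ∀ i, SinglePeakedD (v i) (p i) k)
    (hdistinct : Function.Injective p)
    (hcover : (⋃ i, Supp01 (v i)) = Set.Icc (0:ℝ) 1)
    (X : Fin n → Set ℝ) (hX : IsAlloc X)
    (hPO : ParetoOpt v X) :
    NonWasteful v X ∧ ConnPeakPres p X := by
  have hNW : NonWasteful v X := hX.nonWasteful_of_paretoOpt hsp hcover hPO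
  set σ := Tuple.sort p
  have hσ : StrictMono (p ∘ σ) :=
    (Tuple.monotone_sort p).strictMono_of_injective (hdistinct.comp σ.injective)
  obtain ⟨c, hc, hc0, hc1, hXc⟩ := (hX.comp_perm σ).exists_ae_eq_Ioc_of_aePrecedes fun l l' hll' =>
    hPO.aePrecedes hX hsp hNW (hσ hll')
  exact ⟨hNW, c, σ, hc, hc0, hc1, hσ, hXc⟩
end

section
/- Consider a cake-cutting problem on [0,1] with n agents having integrable nonnegative value densities v_1,…,v_n such that the union of the sets {x : v_i(x) > 0} covers [0,1] up to a set of measure zero. If in an allocation X some agent i receives a subset of positive measure on which her density v_i vanishes (i.e., X is wasteful), then X is not Pareto optimal. -/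
open MeasureTheory

/-!
Let `W` be the part of agent `i`'s piece on which her density is not positive. Since the supports
cover the cake up to a null set, some agent `j` has positive density on a part `S` of `W` of
positive measure, and `j ≠ i`. Handing `S` from `i` to `j` costs `i` nothing and strictly
benefits `j`, while every other piece is unchanged: a Pareto improvement.
-/

theorem exists_pos_measure_inter_of_null_diff_iUnion {α ι : Type*} [MeasurableSpace α]
    [Countable ι] {μ : Measure α} {A W : Set α} {B : ι → Set α}
    (hcover : μ (A \ ⋃ k, B k) = 0) (hWA : W ⊆ A) (hW : 0 < μ W) :
    ∃ k, 0 < μ (W ∩ B k) := by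
  by_contra! h
  have hnull : μ ((⋃ k, W ∩ B k) ∪ (A \ ⋃ k, B k)) = 0 :=
    measure_union_null (measure_iUnion_null fun k => nonpos_iff_eq_zero.1 (h k)) hcover
  refine hW.ne' (measure_mono_null (fun x hx => ?_) hnull)
  by_cases hxB : x ∈ ⋃ k, B k
  · obtain ⟨k, hk⟩ := Set.mem_iUnion.1 hxB
    exact Or.inl (Set.mem_iUnion.2 ⟨k, hx, hk⟩)
  · exact Or.inr ⟨hWA hx, hxB⟩

theorem pieceVal_le_pieceVal_sdiff {v : ℝ → ℝ} {T S : Set ℝ} (hST : S ⊆ T)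
    (hS : MeasurableSet S) (hvT : IntegrableOn v T) (hvS : ∀ x ∈ S, v x ≤ 0) :
    pieceVal v T ≤ pieceVal v (T \ S) := by
  unfold pieceVal
  rw [setIntegral_sdiff hS hvT hST]
  linarith [setIntegral_nonpos (μ := volume) hS hvS]

theorem pieceVal_lt_pieceVal_union {v : ℝ → ℝ} {T S : Set ℝ} (hTS : Disjoint T S)
    (hS : MeasurableSet S) (hvT : IntegrableOn v T) (hvS : IntegrableOn v S)
    (hpos : ∀ x ∈ S, 0 < v x) (hS0 : 0 < volume S) :
    pieceVal v T < pieceVal v (T ∪ S) := by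
  have hSpos : 0 < ∫ x in S, v x := by
    rw [setIntegral_pos_iff_support_of_nonneg_ae
      (ae_restrict_of_forall_mem hS fun x hx => (hpos x hx).le) hvS]
    exact hS0.trans_le (measure_mono fun x hx => ⟨(hpos x hx).ne', hx⟩)
  unfold pieceVal
  rw [setIntegral_union hTS hS hvT hvS]
  linarith

def transferTo {ι α : Type*} [DecidableEq ι] (X : ι → Set α) (S : Set α) (j : ι) :
    ι → Set α :=
  Function.update (fun k => X k \ S) j (X j ∪ S)

section transferTo

variable {ι α : Type*} [DecidableEq ι] {X : ι → Set α} {S : Set α} {j k : ι}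

theorem mem_transferTo_iff {x : α} :
    x ∈ transferTo X S j k ↔ (x ∈ S ∧ k = j) ∨ (x ∉ S ∧ x ∈ X k) := by
  unfold transferTo
  rcases eq_or_ne k j with rfl | hkj
  · simp only [Function.update_self, Set.mem_union]
    tauto
  · simp only [Function.update_of_ne hkj, Set.mem_sdiff]
    tauto

theorem transferTo_self : transferTo X S j j = X j ∪ S := Function.update_self ..

theorem transferTo_of_ne (hkj : k ≠ j) : transferTo X S j k = X k \ S :=
  Function.update_of_ne hkj ..

theorem transferTo_of_disjoint (hkj : k ≠ j) (hXS : Disjoint (X k) S) :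
    transferTo X S j k = X k := by
  rw [transferTo_of_ne hkj, hXS.sdiff_eq_left]

end transferTo

theorem IsAlloc.subset_Icc_s3 {n : ℕ} {X : Fin n → Set ℝ} (hX : IsAlloc X) (k : Fin n) :
    X k ⊆ Set.Icc 0 1 :=
  hX.2.2 ▸ Set.subset_iUnion X k

theorem IsAlloc.disjoint {n : ℕ} {X : Fin n → Set ℝ} (hX : IsAlloc X) {k l : Fin n}
    (hkl : k ≠ l) : Disjoint (X k) (X l) :=
  Set.disjoint_iff_inter_eq_empty.2 (hX.2.1 k l hkl)

theorem IsAlloc.transferTo {n : ℕ} {X : Fin n → Set ℝ} (hX : IsAlloc X) {S : Set ℝ}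
    (hS : MeasurableSet S) (hS01 : S ⊆ Set.Icc 0 1) (j : Fin n) :
    IsAlloc (transferTo X S j) := by
  refine ⟨fun k => ?_, fun k l hkl => ?_, ?_⟩
  · rcases eq_or_ne k j with rfl | hkj
    · exact transferTo_self (X := X) ▸ (hX.1 k).union hS
    · exact transferTo_of_ne hkj ▸ (hX.1 k).diff hS
  · refine Set.eq_empty_of_forall_notMem fun x ⟨hxk, hxl⟩ => ?_
    rw [mem_transferTo_iff] at hxk hxl
    rcases hxk with ⟨_, rfl⟩ | ⟨hxS, hxk⟩
    · exact hkl (hxl.resolve_right fun h => h.1 ‹_›).2.symm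
    · exact (hX.disjoint hkl).notMem_of_mem_left hxk (hxl.resolve_left fun h => hxS h.1).2
  · ext x
    simp only [Set.mem_iUnion, mem_transferTo_iff]
    constructor
    · rintro ⟨k, ⟨hxS, -⟩ | ⟨-, hxk⟩⟩
      exacts [hS01 hxS, hX.subset_Icc_s3 k hxk]
    · intro hx
      by_cases hxS : x ∈ S
      · exact ⟨j, Or.inl ⟨hxS, rfl⟩⟩
      · obtain ⟨k, hxk⟩ := Set.mem_iUnion.1 (hX.2.2.symm ▸ hx : x ∈ ⋃ k, X k)
        exact ⟨k, Or.inr ⟨hxS, hxk⟩⟩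

theorem statement3_general {n : ℕ} (v : Fin n → ℝ → ℝ)
    (hmeas : ∀ i, Measurable (v i))
    (hint : ∀ i, IntegrableOn (v i) (Set.Icc (0:ℝ) 1))
    (hcover : volume (Set.Icc (0:ℝ) 1 \ ⋃ i, {x | 0 < v i x}) = 0)
    (X : Fin n → Set ℝ) (hX : IsAlloc X)
    (i : Fin n) (hwaste : 0 < volume (X i \ {x | 0 < v i x})) :
    ¬ ParetoOpt v X := by
  obtain ⟨j, hj⟩ := exists_pos_measure_inter_of_null_diff_iUnion hcover
    (Set.sdiff_subset.trans (hX.subset_Icc_s3 i)) hwaste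
  set S := (X i \ {x | 0 < v i x}) ∩ {x | 0 < v j x}
  have hSXi : S ⊆ X i := fun x hx => hx.1.1
  have hS : MeasurableSet S := ((hX.1 i).diff (measurableSet_lt measurable_const (hmeas i))).inter
    (measurableSet_lt measurable_const (hmeas j))
  have hji : j ≠ i := by
    rintro rfl
    exact hj.ne' (measure_mono_null (fun x hx => (hx.1.2 hx.2).elim) measure_empty)
  have hS01 : S ⊆ Set.Icc 0 1 := hSXi.trans (hX.subset_Icc_s3 i)
  have hintX : ∀ k, IntegrableOn (v k) (X k) := fun k => (hint k).mono_set (hX.subset_Icc_s3 k)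
  have hgain : pieceVal (v j) (X j) < pieceVal (v j) (transferTo X S j j) :=
    transferTo_self (X := X) ▸ pieceVal_lt_pieceVal_union
      ((hX.disjoint hji).mono_right hSXi) hS (hintX j) ((hint j).mono_set hS01)
      (fun x hx => hx.2) hj
  refine fun hPO => hPO ⟨transferTo X S j, hX.transferTo hS hS01 j, fun k => ?_, j, hgain⟩
  rcases eq_or_ne k j with rfl | hkj
  · exact hgain.le
  rcases eq_or_ne k i with rfl | hki
  · rw [transferTo_of_ne hkj]
    exact pieceVal_le_pieceVal_sdiff hSXi hS (hintX k) fun x hx => not_lt.1 hx.1.2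
  · rw [transferTo_of_disjoint hkj ((hX.disjoint hki).mono_right hSXi)]

/-- A wasteful allocation (some agent holds a positive-measure set where her
density vanishes) is not Pareto optimal, provided the supports cover the cake
up to a null set. -/
theorem statement3 {n : ℕ} (v : Fin n → ℝ → ℝ)
    (hmeas : ∀ i, Measurable (v i))
    (hint : ∀ i, IntegrableOn (v i) (Set.Icc (0:ℝ) 1))
    (hnonneg : ∀ i x, 0 ≤ v i x)
    (hcover : volume (Set.Icc (0:ℝ) 1 \ ⋃ i, {x | 0 < v i x}) = 0)
    (X : Fin n → Set ℝ) (hX : IsAlloc X)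
    (i : Fin n) (hwaste : 0 < volume (X i \ {x | 0 < v i x})) :
    ¬ ParetoOpt v X :=
  statement3_general v hmeas hint hcover X hX i hwaste
end

section
/- Let v_i and v_j be single-peaked value densities on [0,1] with the same slope k > 0, peaks p_i < p_j, and supports U_i, U_j contained in [0,1] (so that normalization forces equal peak densities v_i(p_i) = v_j(p_j)). Let a < b < c ≤ p_i with [a,c] ⊆ U_j, and let b' ∈ [a,c] satisfy ∫_{b'}^{c} v_j = ∫_{a}^{b} v_j. Then ∫_{a}^{b'} v_i > ∫_{b}^{c} v_i. (Hence reassigning [a,c] so that agent i gets [a,b') and agent j gets [b',c], instead of j holding [a,b] and i holding (b,c], is a Pareto improvement.) -/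
open MeasureTheory

/-!
Normalisation forces a triangular density whose support lies in `[0, 1]` to have peak value `√k`,
so on `[a, c]`, which lies left of both peaks, `v_i = v_j + k (p_j - p_i)`. By the choice of `b'`,
agent `j` values `[a, b']` exactly as much as `[b, c]`; since `v_j` is increasing on `[a, c]`,
the left interval `[a, b']` must be the longer one (otherwise it would sit inside a leftward
translate of `[b, c]`, where `v_j` is pointwise smaller). Agent `i` gains the constant
surplus `k (p_j - p_i)` per unit length, hence prefers the longer interval.
-/

theorem integral_affine (α β u w : ℝ) :
    ∫ x in u..w, (α + β * x) = (w - u) * (α + β * (u + w) / 2) := by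
  rw [intervalIntegral.integral_add intervalIntegrable_const
      (intervalIntegral.intervalIntegrable_id.const_mul β), intervalIntegral.integral_const,
    intervalIntegral.integral_const_mul, integral_id, smul_eq_mul]
  ring

theorem integral_tent {k h : ℝ} (hk : 0 < k) (hh : 0 ≤ h) (p : ℝ) :
    ∫ x, max 0 (h - k * |x - p|) = h ^ 2 / k := by
  set r := h / k with hr_def
  have hkr : k * r = h := mul_div_cancel₀ h hk.ne'
  have hr : 0 ≤ r := div_nonneg hh hk.le
  have hout : ∀ x ∉ Set.Icc (p - r) (p + r), max 0 (h - k * |x - p|) = 0 := by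
    intro x hx
    have : r ≤ |x - p| := by
      rw [Set.mem_Icc, not_and_or, not_le, not_le] at hx
      rcases hx with hx | hx
      · rw [abs_of_neg (by linarith)]; linarith
      · rw [abs_of_pos (by linarith)]; linarith
    exact max_eq_left (by nlinarith)
  have hinside : ∀ x, |x - p| ≤ r → max 0 (h - k * |x - p|) = h - k * |x - p| :=
    fun x hx => max_eq_right (by nlinarith)
  have hcont : Continuous fun x => max 0 (h - k * |x - p|) := by fun_prop
  have hleft : ∫ x in (p - r)..p, max 0 (h - k * |x - p|) =
      ∫ x in (p - r)..p, ((h - k * p) + k * x) := by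
    refine intervalIntegral.integral_congr fun x hx => ?_
    rw [Set.uIcc_of_le (by linarith)] at hx
    have habs : |x - p| = p - x := by rw [abs_of_nonpos (by linarith [hx.2])]; ring
    rw [hinside x (by rw [habs]; linarith [hx.1]), habs]
    ring
  have hright : ∫ x in p..(p + r), max 0 (h - k * |x - p|) =
      ∫ x in p..(p + r), ((h + k * p) + (-k) * x) := by
    refine intervalIntegral.integral_congr fun x hx => ?_
    rw [Set.uIcc_of_le (by linarith)] at hx
    have habs : |x - p| = x - p := abs_of_nonneg (by linarith [hx.1])
    rw [hinside x (by rw [habs]; linarith [hx.2]), habs]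
    ring
  rw [← setIntegral_eq_integral_of_forall_compl_eq_zero hout, integral_Icc_eq_integral_Ioc,
    ← intervalIntegral.integral_of_le (by linarith),
    ← intervalIntegral.integral_add_adjacent_intervals (b := p)
      (hcont.intervalIntegrable _ _) (hcont.intervalIntegrable _ _),
    hleft, hright, integral_affine, integral_affine, hr_def]
  field_simp
  ring

theorem peak_eq_sqrt_of_support_subset {v : ℝ → ℝ} {p k : ℝ} (hk : 0 < k)
    (hv : ∀ x, v x = max 0 (v p - k * |x - p|))
    (hU : {x | 0 < v x} ⊆ Set.Icc (0 : ℝ) 1) (hn : ∫ x in Set.Icc (0 : ℝ) 1, v x = 1) :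
    v p = √k := by
  have hv_nonneg : ∀ x, 0 ≤ v x := fun x => (hv x).symm ▸ le_max_left _ _
  have hout : ∀ x ∉ Set.Icc (0 : ℝ) 1, v x = 0 := fun x hx =>
    le_antisymm (not_lt.1 fun h => hx (hU h)) (hv_nonneg x)
  rw [setIntegral_eq_integral_of_forall_compl_eq_zero hout, funext hv,
    integral_tent hk (hv_nonneg p)] at hn
  rw [← Real.sqrt_sq (hv_nonneg p), (div_eq_one_iff_eq hk.ne').1 hn]

theorem sub_lt_sub_of_integral_eq_of_strictMonoOn {f : ℝ → ℝ} {a b c b' : ℝ}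
    (hf : ContinuousOn f (Set.Icc a c)) (hmono : StrictMonoOn f (Set.Icc a c))
    (hf_nonneg : ∀ x ∈ Set.Icc a c, 0 ≤ f x) (hab : a < b) (hbc : b < c)
    (hb' : b' ∈ Set.Icc a c) (heq : ∫ x in a..b', f x = ∫ x in b..c, f x) :
    c - b < b' - a := by
  by_contra! hle
  set e := c - (b - a)
  have hfi : IntervalIntegrable f volume a e :=
    (hf.mono (Set.Icc_subset_Icc_right (by linarith))).intervalIntegrable_of_Icc (by linarith)
  have h_mono : ∫ x in a..b', f x ≤ ∫ x in a..e, f x :=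
    intervalIntegral.integral_mono_interval le_rfl hb'.1 (by linarith)
      (ae_restrict_of_forall_mem measurableSet_Ioc fun x hx =>
        hf_nonneg x ⟨hx.1.le, by linarith [hx.2]⟩) hfi
  have h_shift : ∫ x in a..e, f x = ∫ x in b..c, f (x - (b - a)) := by
    rw [intervalIntegral.integral_comp_sub_right, sub_sub_cancel]
  have h_shift_lt : ∀ x ∈ Set.Icc b c, f (x - (b - a)) < f x := fun x hx =>
    hmono ⟨by linarith [hx.1], by linarith [hx.2]⟩ ⟨by linarith [hx.1], hx.2⟩ (by linarith)
  have h_lt : ∫ x in b..c, f (x - (b - a)) < ∫ x in b..c, f x :=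
    intervalIntegral.integral_lt_integral_of_continuousOn_of_le_of_exists_lt hbc
      (hf.comp (continuousOn_id.sub continuousOn_const) fun x hx =>
        ⟨by linarith [hx.1], by linarith [hx.2]⟩)
      (hf.mono (Set.Icc_subset_Icc_left hab.le))
      (fun x hx => (h_shift_lt x (Set.Ioc_subset_Icc_self hx)).le)
      ⟨c, ⟨hbc.le, le_rfl⟩, h_shift_lt c ⟨hbc.le, le_rfl⟩⟩
  linarith

theorem integral_lt_integral_of_eqOn_add_const {f g : ℝ → ℝ} {a b c b' d : ℝ}
    (hf : ContinuousOn f (Set.Icc a c)) (hmono : StrictMonoOn f (Set.Icc a c))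
    (hf_nonneg : ∀ x ∈ Set.Icc a c, 0 ≤ f x) (hd : 0 < d)
    (hg : ∀ x ∈ Set.Icc a c, g x = f x + d) (hab : a < b) (hbc : b < c)
    (hb' : b' ∈ Set.Icc a c) (heq : ∫ x in b'..c, f x = ∫ x in a..b, f x) :
    ∫ x in b..c, g x < ∫ x in a..b', g x := by
  have hfi : ∀ u ∈ Set.Icc a c, ∀ w ∈ Set.Icc a c, IntervalIntegrable f volume u w :=
    fun u hu w hw => (hf.mono (Set.uIcc_subset_Icc hu hw)).intervalIntegrable
  have hac : a ≤ c := (hab.trans hbc).le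
  have hb : b ∈ Set.Icc a c := ⟨hab.le, hbc.le⟩
  have hsplit : ∀ m ∈ Set.Icc a c,
      (∫ x in a..m, f x) + ∫ x in m..c, f x = ∫ x in a..c, f x := fun m hm =>
    intervalIntegral.integral_add_adjacent_intervals
      (hfi a (Set.left_mem_Icc.2 hac) m hm) (hfi m hm c (Set.right_mem_Icc.2 hac))
  have hmass : ∫ x in a..b', f x = ∫ x in b..c, f x := by linarith [hsplit b hb, hsplit b' hb']
  have hlen : c - b < b' - a :=
    sub_lt_sub_of_integral_eq_of_strictMonoOn hf hmono hf_nonneg hab hbc hb' hmass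
  have hshift : ∀ u ∈ Set.Icc a c, ∀ w ∈ Set.Icc a c,
      ∫ x in u..w, g x = (∫ x in u..w, f x) + (w - u) * d := by
    intro u hu w hw
    rw [intervalIntegral.integral_congr fun x hx => hg x (Set.uIcc_subset_Icc hu hw hx),
      intervalIntegral.integral_add (hfi u hu w hw) intervalIntegrable_const,
      intervalIntegral.integral_const, smul_eq_mul]
  rw [hshift b hb c (Set.right_mem_Icc.2 hac), hshift a (Set.left_mem_Icc.2 hac) b' hb', hmass]
  have := mul_lt_mul_of_pos_right hlen hd
  linarith

/-- The key swap lemma of Figure 2: with common slope k, peaks p_i < p_j, full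
triangular supports inside [0,1], a < b < c ≤ p_i, [a,c] inside agent j's support,
and b' chosen so that ∫_{b'}^c v_j = ∫_a^b v_j, we get ∫_a^{b'} v_i > ∫_b^c v_i. -/
theorem statement4 (vi vj : ℝ → ℝ) (k pi pj : ℝ) (hk : 0 < k) (hpp : pi < pj)
    (hvi : ∀ x : ℝ, vi x = max 0 (vi pi - k * |x - pi|))
    (hvj : ∀ x : ℝ, vj x = max 0 (vj pj - k * |x - pj|))
    (hUi : {x : ℝ | 0 < vi x} ⊆ Set.Icc (0:ℝ) 1)
    (hUj : {x : ℝ | 0 < vj x} ⊆ Set.Icc (0:ℝ) 1)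
    (hni : (∫ x in Set.Icc (0:ℝ) 1, vi x) = 1)
    (hnj : (∫ x in Set.Icc (0:ℝ) 1, vj x) = 1)
    (a b c b' : ℝ) (hab : a < b) (hbc : b < c) (hcpi : c ≤ pi)
    (hac : Set.Icc a c ⊆ {x : ℝ | 0 < vj x})
    (hb' : b' ∈ Set.Icc a c)
    (heq : (∫ x in b'..c, vj x) = ∫ x in a..b, vj x) :
    (∫ x in b..c, vi x) < ∫ x in a..b', vi x := by
  have hpeak : vi pi = vj pj := by
    rw [peak_eq_sqrt_of_support_subset hk hvi hUi hni,
      peak_eq_sqrt_of_support_subset hk hvj hUj hnj]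
  have hvj_eq : ∀ x ∈ Set.Icc a c, vj x = vj pj - k * (pj - x) := fun x hx => by
    have hpos : 0 < vj x := hac hx
    rw [hvj x] at hpos ⊢
    rw [max_eq_right ((lt_max_iff.1 hpos).resolve_left (lt_irrefl 0)).le,
      abs_of_nonpos (by linarith [hx.2]), neg_sub]
  have hvi_eq : ∀ x ∈ Set.Icc a c, vi x = vj x + k * (pj - pi) := fun x hx => by
    have habs : |x - pi| = pi - x := by rw [abs_of_nonpos (by linarith [hx.2])]; ring
    have hlin : vj pj - k * (pi - x) = vj x + k * (pj - pi) := by rw [hvj_eq x hx]; ring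
    rw [hvi x, habs, hpeak, hlin,
      max_eq_right (add_pos (hac hx) (mul_pos hk (sub_pos.2 hpp))).le]
  have hcont : Continuous vj := by rw [funext hvj]; fun_prop
  exact integral_lt_integral_of_eqOn_add_const hcont.continuousOn
    (fun x hx y hy hxy => by rw [hvj_eq x hx, hvj_eq y hy]; nlinarith)
    (fun x hx => (hac hx).le) (mul_pos hk (sub_pos.2 hpp)) hvi_eq hab hbc hb' heq
end

section
/- Let n agents have single-peaked value densities with a common slope k > 0, peaks p_1 < p_2 < … < p_n, supports U_i contained in [0,1] (so that normalization forces all peak densities to be equal), and ∫_0^1 v_i = 1 for all i. Then the connected peak-preserving allocation whose cut points are the midpoints c_i = (p_i + p_{i+1})/2 for i = 1,…,n−1 (agent i receiving (c_{i−1}, c_i] with c_0 = 0, c_n = 1) maximizes the sum of agents' utilities Σ_i V_i(X_i) over all allocations; in particular it is Pareto optimal. -/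
open MeasureTheory

open Set

/-! A tent of height `H` and slope `k` has area `H ^ 2 / k`, so normalization forces every
density to peak at height `√k`. With equal heights and slopes, the largest density at a point
belongs to an agent whose peak is nearest, and the midpoint cuts give each point to such an
agent. Hence this allocation collects the integral over `[0, 1]` of the upper envelope
`x ↦ maxⱼ vⱼ x`, which bounds the welfare of every allocation; a Pareto improvement would
exceed that bound. -/

lemma integral_max_zero_sub_mul_abs_sub {H k : ℝ} (hH : 0 ≤ H) (hk : 0 < k) (p : ℝ) :
    ∫ x, max 0 (H - k * |x - p|) = H ^ 2 / k := by
  have hd : 0 ≤ H / k := div_nonneg hH hk.le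
  rw [integral_sub_right_eq_self (fun x => max 0 (H - k * |x|)) p,
    integral_comp_abs (f := fun x => max 0 (H - k * x)),
    setIntegral_eq_of_subset_of_forall_sdiff_eq_zero measurableSet_Ioi Ioc_subset_Ioi_self,
    setIntegral_congr_fun measurableSet_Ioc (g := fun x => H - k * x),
    ← intervalIntegral.integral_of_le hd]
  · rw [intervalIntegral.integral_sub intervalIntegrable_const
      ((continuous_const_mul k).intervalIntegrable _ _), intervalIntegral.integral_const_mul]
    simp only [intervalIntegral.integral_const, integral_id, smul_eq_mul]
    field_simp
    ring
  · exact fun x hx => max_eq_right (sub_nonneg.2 ((le_div_iff₀' hk).1 hx.2))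
  · rintro x ⟨hx0, hx⟩
    have hHx : H / k < x := not_le.1 fun h => hx ⟨hx0, h⟩
    exact max_eq_left (sub_nonpos.2 ((div_lt_iff₀' hk).1 hHx).le)

section Tent

variable {v : ℝ → ℝ} {p k : ℝ}

lemma continuous_of_forall_eq_max_zero (hv : ∀ x, v x = max 0 (v p - k * |x - p|)) :
    Continuous v := by
  rw [funext hv]
  fun_prop

lemma nonneg_of_forall_eq_max_zero (hv : ∀ x, v x = max 0 (v p - k * |x - p|)) (x : ℝ) :
    0 ≤ v x :=
  (le_max_left _ _).trans (hv x).ge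

lemma peak_eq_sqrt_of_integral_eq_one (hk : 0 < k)
    (hv : ∀ x, v x = max 0 (v p - k * |x - p|)) (hsupp : {x | 0 < v x} ⊆ Icc 0 1)
    (hnorm : ∫ x in Icc (0:ℝ) 1, v x = 1) :
    v p = √k := by
  have hH : 0 ≤ v p := nonneg_of_forall_eq_max_zero hv p
  have hint : ∫ x, v x = v p ^ 2 / k := by
    rw [← integral_max_zero_sub_mul_abs_sub hH hk p]
    exact integral_congr_ae (ae_of_all _ hv)
  have hvanish : ∀ x ∉ Icc (0:ℝ) 1, v x = 0 := fun x hx =>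
    le_antisymm (not_lt.1 fun h => hx (hsupp h)) (nonneg_of_forall_eq_max_zero hv x)
  rw [setIntegral_eq_integral_of_forall_compl_eq_zero hvanish, hint,
    div_eq_one_iff_eq hk.ne'] at hnorm
  rw [← Real.sqrt_sq hH, hnorm]

end Tent

section Allocation

variable {n : ℕ} {Y : Fin n → Set ℝ}

lemma IsAlloc.subset_Icc_s10 (hY : IsAlloc Y) (i : Fin n) : Y i ⊆ Icc 0 1 :=
  hY.2.2 ▸ subset_iUnion Y i

lemma IsAlloc.sum_setIntegral (hY : IsAlloc Y) {g : ℝ → ℝ} (hg : IntegrableOn g (Icc 0 1)) :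
    ∑ i, ∫ x in Y i, g x = ∫ x in Icc 0 1, g x := by
  rw [← hY.2.2, integral_iUnion_fintype hY.1
    (fun i j hij => disjoint_iff_inter_eq_empty.2 (hY.2.1 i j hij))
    fun i => hg.mono_set (hY.subset_Icc_s10 i)]

lemma IsAlloc.sum_pieceVal_le (hY : IsAlloc Y) {v : Fin n → ℝ → ℝ} {g : ℝ → ℝ}
    (hv : ∀ i, IntegrableOn (v i) (Icc 0 1)) (hg : IntegrableOn g (Icc 0 1))
    (hvg : ∀ i, ∀ x ∈ Icc 0 1, v i x ≤ g x) :
    ∑ i, pieceVal (v i) (Y i) ≤ ∫ x in Icc 0 1, g x :=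
  hY.sum_setIntegral hg ▸ Finset.sum_le_sum fun i _ =>
    setIntegral_mono_on ((hv i).mono_set (hY.subset_Icc_s10 i)) (hg.mono_set (hY.subset_Icc_s10 i))
      (hY.1 i) fun x hx => hvg i x (hY.subset_Icc_s10 i hx)

lemma IsAlloc.sum_pieceVal_eq (hY : IsAlloc Y) {v : Fin n → ℝ → ℝ} {g : ℝ → ℝ}
    (hg : IntegrableOn g (Icc 0 1)) (hvg : ∀ i, ∀ x ∈ Y i, v i x = g x) :
    ∑ i, pieceVal (v i) (Y i) = ∫ x in Icc 0 1, g x :=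
  (Finset.sum_congr rfl fun i _ => setIntegral_congr_fun (hY.1 i) (hvg i)).trans
    (hY.sum_setIntegral hg)

lemma paretoOpt_of_forall_sum_le {v : Fin n → ℝ → ℝ} {X : Fin n → Set ℝ}
    (h : ∀ Y, IsAlloc Y → ∑ i, pieceVal (v i) (Y i) ≤ ∑ i, pieceVal (v i) (X i)) :
    ParetoOpt v X := by
  rintro ⟨Y, hY, hle, i, hi⟩
  exact (h Y hY).not_gt (Finset.sum_lt_sum (fun i _ => hle i) ⟨i, Finset.mem_univ i, hi⟩)

end Allocation

lemma abs_sub_le_abs_sub_of_midpoint_le {a b x : ℝ} (hab : a ≤ b) (h : (a + b) / 2 ≤ x) :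
    |x - b| ≤ |x - a| :=
  (abs_le.2 ⟨by linarith, by linarith⟩).trans (le_abs_self _)

lemma abs_sub_le_abs_sub_of_le_midpoint {a b x : ℝ} (hab : a ≤ b) (h : x ≤ (a + b) / 2) :
    |x - a| ≤ |x - b| :=
  (abs_le.2 ⟨by linarith, by linarith⟩).trans ((le_abs_self _).trans_eq (abs_sub_comm _ _))

def cutPieces (c : ℕ → ℝ) (n : ℕ) (i : Fin n) : Set ℝ :=
  if (i : ℕ) = 0 then Icc (c 0) (c 1) else Ioc (c i) (c ((i : ℕ) + 1))

section CutPieces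

variable {c : ℕ → ℝ} {n : ℕ} {i : Fin n} {x : ℝ}

lemma le_of_mem_cutPieces (hx : x ∈ cutPieces c n i) : x ≤ c (i + 1) := by
  unfold cutPieces at hx
  split_ifs at hx with hi
  · rw [hi]; exact hx.2
  · exact hx.2

lemma lt_of_mem_cutPieces (hi : (i : ℕ) ≠ 0) (hx : x ∈ cutPieces c n i) : c i < x := by
  rw [cutPieces, if_neg hi] at hx
  exact hx.1

lemma cutPieces_subset_Icc (hc : MonotoneOn c (Iic n)) (i : Fin n) :
    cutPieces c n i ⊆ Icc (c 0) (c n) := by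
  have hle : ∀ m ≤ n, c 0 ≤ c m ∧ c m ≤ c n := fun m hm =>
    ⟨hc (Nat.zero_le n) hm (Nat.zero_le m), hc hm (le_refl n) hm⟩
  unfold cutPieces
  split_ifs with hi
  · exact Icc_subset_Icc le_rfl (hle 1 (by omega)).2
  · exact Ioc_subset_Icc_self.trans
      (Icc_subset_Icc (hle i i.isLt.le).1 (hle (i + 1) i.isLt).2)

lemma exists_mem_cutPieces (hn : 0 < n) (hx : x ∈ Icc (c 0) (c n)) :
    ∃ i, x ∈ cutPieces c n i := by
  by_cases hx1 : x ≤ c 1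
  · exact ⟨⟨0, hn⟩, by simp [cutPieces, hx.1, hx1]⟩
  have hex : ∃ m, x ≤ c (m + 1) := ⟨n - 1, by rw [Nat.sub_add_cancel hn]; exact hx.2⟩
  have hm0 : Nat.find hex ≠ 0 := fun h => hx1 (by simpa [h] using Nat.find_spec hex)
  have hmn : Nat.find hex < n := by
    have := Nat.find_min' hex (m := n - 1) (by rw [Nat.sub_add_cancel hn]; exact hx.2)
    omega
  refine ⟨⟨Nat.find hex, hmn⟩, ?_⟩
  rw [cutPieces, if_neg hm0]
  refine ⟨?_, Nat.find_spec hex⟩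
  have := Nat.find_min hex (m := Nat.find hex - 1) (by omega)
  rw [Nat.sub_add_cancel (Nat.pos_of_ne_zero hm0)] at this
  exact not_le.1 this

lemma isAlloc_cutPieces (hn : 0 < n) (hc : MonotoneOn c (Iic n)) (h0 : c 0 = 0) (h1 : c n = 1) :
    IsAlloc (cutPieces c n) := by
  refine ⟨fun i => ?_, ?_, ?_⟩
  · unfold cutPieces
    split_ifs
    exacts [measurableSet_Icc, measurableSet_Ioc]
  · suffices h : ∀ i j : Fin n, i < j → cutPieces c n i ∩ cutPieces c n j = ∅ by
      intro i j hij
      rcases hij.lt_or_gt with hij | hji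
      · exact h i j hij
      · rw [inter_comm]; exact h j i hji
    refine fun i j hij => eq_empty_iff_forall_notMem.2 fun x ⟨hxi, hxj⟩ => ?_
    have hcij : c (i + 1) ≤ c j := hc i.isLt j.isLt.le (Fin.lt_def.1 hij)
    have := lt_of_mem_cutPieces (by omega) hxj
    linarith [le_of_mem_cutPieces hxi]
  · rw [← h0, ← h1]
    exact (iUnion_subset (cutPieces_subset_Icc hc)).antisymm
      fun x hx => mem_iUnion.2 (exists_mem_cutPieces hn hx)

end CutPieces

def MidpointCuts {n : ℕ} (p : Fin n → ℝ) (cut : ℕ → ℝ) : Prop :=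
  ∀ m (_ : 0 < m) (h : m < n), cut m = (p ⟨m - 1, (m.sub_le 1).trans_lt h⟩ + p ⟨m, h⟩) / 2

namespace MidpointCuts

variable {n : ℕ} {p : Fin n → ℝ} {cut : ℕ → ℝ}

lemma cut_succ_le_midpoint (hmid : MidpointCuts p cut) (hp : Monotone p) {i j : Fin n}
    (hij : i < j) : cut (i + 1) ≤ (p i + p j) / 2 := by
  have hin : (i : ℕ) + 1 < n := lt_of_le_of_lt hij j.isLt
  rw [hmid (i + 1) (Nat.succ_pos i) hin]
  show (p i + p ⟨i + 1, hin⟩) / 2 ≤ (p i + p j) / 2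
  linarith [hp (Fin.mk_le_of_le_val hij : (⟨i + 1, hin⟩ : Fin n) ≤ j)]

lemma midpoint_le_cut (hmid : MidpointCuts p cut) (hp : Monotone p) {i j : Fin n}
    (hij : i < j) : (p i + p j) / 2 ≤ cut j := by
  rw [hmid j (by omega) j.isLt]
  linarith [hp (Fin.le_def.2 (by simp only; omega) : i ≤ ⟨j - 1, by omega⟩)]

lemma cut_le_peak (hmid : MidpointCuts p cut) (hp : Monotone p) (hp0 : ∀ i, 0 ≤ p i)
    (h0 : cut 0 = 0) (i : Fin n) : cut i ≤ p i := by
  rcases Nat.eq_zero_or_pos i with hi | hi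
  · rw [hi, h0]
    exact hp0 i
  · rw [hmid i hi i.isLt]
    linarith [hp (Fin.le_def.2 (by simp only; omega) : (⟨i - 1, by omega⟩ : Fin n) ≤ i)]

lemma peak_le_cut_succ (hmid : MidpointCuts p cut) (hp : Monotone p) (hp1 : ∀ i, p i ≤ 1)
    (h1 : cut n = 1) (i : Fin n) : p i ≤ cut (i + 1) := by
  rcases (show (i : ℕ) + 1 ≤ n from i.isLt).lt_or_eq with hin | hin
  · rw [hmid (i + 1) (Nat.succ_pos i) hin]
    show p i ≤ (p i + p ⟨i + 1, hin⟩) / 2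
    linarith [hp (Fin.le_def.2 (by simp only; omega) : i ≤ ⟨i + 1, hin⟩)]
  · rw [hin, h1]
    exact hp1 i

lemma monotoneOn (hmid : MidpointCuts p cut) (hp : Monotone p) (hp01 : ∀ i, p i ∈ Icc 0 1)
    (h0 : cut 0 = 0) (h1 : cut n = 1) : MonotoneOn cut (Iic n) :=
  monotoneOn_of_le_add_one ordConnected_Iic fun a _ _ ha =>
    (hmid.cut_le_peak hp (fun i => (hp01 i).1) h0 ⟨a, ha⟩).trans
      (hmid.peak_le_cut_succ hp (fun i => (hp01 i).2) h1 ⟨a, ha⟩)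

lemma abs_sub_peak_le_of_mem_cutPieces (hmid : MidpointCuts p cut) (hp : Monotone p)
    {i : Fin n} {x : ℝ} (hx : x ∈ cutPieces cut n i) (j : Fin n) : |x - p i| ≤ |x - p j| := by
  rcases lt_trichotomy j i with hji | rfl | hij
  · exact abs_sub_le_abs_sub_of_midpoint_le (hp hji.le)
      ((hmid.midpoint_le_cut hp hji).trans (lt_of_mem_cutPieces (by omega) hx).le)
  · exact le_rfl
  · exact abs_sub_le_abs_sub_of_le_midpoint (hp hij.le)
      ((le_of_mem_cutPieces hx).trans (hmid.cut_succ_le_midpoint hp hij))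

end MidpointCuts

/-- The connected peak-preserving allocation cutting at midpoints of consecutive
peaks maximizes the sum of utilities over all allocations and is Pareto optimal
(common slope, full triangular supports inside [0,1], sorted peaks). -/
theorem statement10 {n : ℕ} (v : Fin n → ℝ → ℝ) (p : Fin n → ℝ) (k : ℝ)
    (hk : 0 < k)
    (hsp : ∀ i, ∀ x : ℝ, v i x = max 0 (v i (p i) - k * |x - p i|))
    (hsupp : ∀ i, {x : ℝ | 0 < v i x} ⊆ Set.Icc (0:ℝ) 1)
    (hnorm : ∀ i, (∫ x in Set.Icc (0:ℝ) 1, v i x) = 1)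
    (hsorted : StrictMono p)
    (cut : ℕ → ℝ) (hcut0 : cut 0 = 0) (hcutn : cut n = 1)
    (hcutmid : ∀ m (h1 : 0 < m) (h2 : m < n),
      cut m = (p ⟨m - 1, by omega⟩ + p ⟨m, h2⟩) / 2)
    (X : Fin n → Set ℝ)
    (hXdef : ∀ i : Fin n, X i =
      if (i : ℕ) = 0 then Set.Icc (cut 0) (cut 1)
      else Set.Ioc (cut i) (cut ((i : ℕ) + 1))) :
    IsAlloc X ∧
    (∀ Y : Fin n → Set ℝ, IsAlloc Y →
      (∑ i, pieceVal (v i) (Y i)) ≤ ∑ i, pieceVal (v i) (X i)) ∧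
    ParetoOpt v X := by
  have hn : 0 < n := Nat.pos_of_ne_zero (by rintro rfl; linarith)
  have hpeak : ∀ i, v i (p i) = √k := fun i =>
    peak_eq_sqrt_of_integral_eq_one hk (hsp i) (hsupp i) (hnorm i)
  have hp01 : ∀ i, p i ∈ Icc 0 1 := fun i =>
    hsupp i (show 0 < v i (p i) by rw [hpeak]; positivity)
  have hcont : ∀ i, Continuous (v i) := fun i => continuous_of_forall_eq_max_zero (hsp i)
  have hmid : MidpointCuts p cut := hcutmid
  obtain rfl : X = cutPieces cut n := funext hXdef
  have hX : IsAlloc (cutPieces cut n) := isAlloc_cutPieces hn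
    (hmid.monotoneOn hsorted.monotone hp01 hcut0 hcutn) hcut0 hcutn
  set envelope : ℝ → ℝ := fun x =>
    Finset.univ.sup' (Finset.univ_nonempty_iff.2 ⟨⟨0, hn⟩⟩) fun j => v j x
  have henv : IntegrableOn envelope (Icc 0 1) :=
    (Continuous.finset_sup'_apply _ fun j _ => hcont j).integrableOn_Icc
  have hvenv : ∀ i, ∀ x ∈ cutPieces cut n i, v i x = envelope x := by
    refine fun i x hx => le_antisymm (Finset.le_sup' (fun j => v j x) (Finset.mem_univ i))
      (Finset.sup'_le _ _ fun j _ => ?_)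
    rw [hsp i, hsp j, hpeak i, hpeak j]
    gcongr max 0 (_ - k * ?_)
    exact hmid.abs_sub_peak_le_of_mem_cutPieces hsorted.monotone hx j
  have hopt : ∀ Y, IsAlloc Y →
      ∑ i, pieceVal (v i) (Y i) ≤ ∑ i, pieceVal (v i) (cutPieces cut n i) :=
    fun Y hY => (hY.sum_pieceVal_le (fun i => (hcont i).integrableOn_Icc) henv
      fun i x _ => Finset.le_sup' (fun j => v j x) (Finset.mem_univ i)).trans
        (hX.sum_pieceVal_eq henv hvenv).ge
  exact ⟨hX, hopt, paretoOpt_of_forall_sum_le hopt⟩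
end

section
/- Suppose [0,1] is partitioned into finitely many intervals I_1,…,I_q such that every agent's density v_i is affine on each I_t. For each t let N_t = {i : ∫_{I_t} v_i > 0} be the set of interested agents, with |N_t| = n_t and the agents of N_t enumerated in some order. Construct the allocation in which each I_t is divided into 2·n_t equal-length pieces, and the j-th agted of N_t receives the j-th and the (2·n_t + 1 − j)-th pieces of I_t (agents not in N_t receive nothing from I_t, and leftover pieces of intervals with N_t = ∅ are assigned arbitrarily). Then the resulting allocation is envy-free: V_i(X_i) ≥ V_i(X_j) for all agents i, j. Moreover each agent i obtains V_i(X_i) = Σ_{t : i ∈ N_t} (1/n_t)·∫_{I_t} v_i. -/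
/-!
On an interval where a density is affine, the value of a subinterval is its length times the
density at its midpoint. The `j`-th and `(2m+1-j)`-th of `2m` equal pieces of `(a, b]` are mirror
images under `x ↦ a + b - x`, so their midpoints average to `(a + b) / 2`: every interested agent
values each agent's share of `(a, b]` at exactly `1/m` of her value for `(a, b]`. Uninterested
agents value `(a, b]` at `0`, so nobody envies anybody.
-/

open MeasureTheory

open MeasureTheory Set Function

theorem Monotone.pairwise_disjoint_on_Ioc_castSucc_succ {q : ℕ} {d : Fin (q + 1) → ℝ}
    (hd : Monotone d) : Pairwise (Disjoint on fun t : Fin q => Ioc (d t.castSucc) (d t.succ)) :=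
  Pairwise.of_lt fun _ _ h => Ioc_disjoint_Ioc_of_le (hd (Fin.succ_le_castSucc_iff.mpr h))

theorem Monotone.Ioc_castSucc_succ_subset {q : ℕ} {d : Fin (q + 1) → ℝ}
    (hd : Monotone d) (t : Fin q) : Ioc (d t.castSucc) (d t.succ) ⊆ Icc (d 0) (d (Fin.last q)) :=
  Ioc_subset_Icc_self.trans (Icc_subset_Icc (hd (Fin.zero_le _)) (hd (Fin.le_last _)))

theorem integral_Ioc_affine (α β : ℝ) {p r : ℝ} (h : p ≤ r) :
    ∫ x in Ioc p r, α * x + β = (r - p) * (α * ((p + r) / 2) + β) := by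
  rw [← intervalIntegral.integral_of_le h, intervalIntegral.integral_add
    (intervalIntegral.intervalIntegrable_id.const_mul α) intervalIntegrable_const,
    intervalIntegral.integral_const_mul, integral_id, intervalIntegral.integral_const, smul_eq_mul]
  ring

section AffineOn

variable {f : ℝ → ℝ} {a b α β p r : ℝ}

theorem setIntegral_Ioc_of_eqOn_affine (hf : ∀ x ∈ Ioc a b, f x = α * x + β)
    (hp : a ≤ p) (hpr : p ≤ r) (hr : r ≤ b) :
    ∫ x in Ioc p r, f x = (r - p) * (α * ((p + r) / 2) + β) := by
  rw [setIntegral_congr_fun measurableSet_Ioc fun x hx => hf x (Ioc_subset_Ioc hp hr hx)]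
  exact integral_Ioc_affine α β hpr

theorem Ioc_union_reflect_subset (hp : a ≤ p) (hpr : p ≤ r) (hr : 2 * r ≤ a + b) :
    Ioc p r ∪ Ioc (a + b - r) (a + b - p) ⊆ Ioc a b :=
  union_subset (Ioc_subset_Ioc hp (by linarith)) (Ioc_subset_Ioc (by linarith) (by linarith))

theorem setIntegral_Ioc_union_reflect_of_eqOn_affine (hf : ∀ x ∈ Ioc a b, f x = α * x + β)
    (hfi : IntegrableOn f (Ioc a b)) (hp : a ≤ p) (hpr : p ≤ r) (hr : 2 * r ≤ a + b) :
    ∫ x in Ioc p r ∪ Ioc (a + b - r) (a + b - p), f x = (r - p) * (α * (a + b) + 2 * β) := by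
  have hsub := Ioc_union_reflect_subset hp hpr hr
  rw [setIntegral_union (Ioc_disjoint_Ioc_of_le (by linarith)) measurableSet_Ioc
      (hfi.mono_set (subset_union_left.trans hsub)) (hfi.mono_set (subset_union_right.trans hsub)),
    setIntegral_Ioc_of_eqOn_affine hf hp hpr (by linarith),
    setIntegral_Ioc_of_eqOn_affine hf (by linarith) (by linarith) (by linarith)]
  ring

end AffineOn

/-- The `j`-th and the `(2m+1-j)`-th of the `2m` equal-length pieces of `(a, b]`. -/
noncomputable def mirroredPieces (a b : ℝ) (m j : ℕ) : Set ℝ :=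
  Ioc (a + ((j : ℝ) - 1) * (b - a) / (2 * m)) (a + (j : ℝ) * (b - a) / (2 * m)) ∪
  Ioc (a + (2 * (m : ℝ) - j) * (b - a) / (2 * m)) (a + (2 * (m : ℝ) + 1 - j) * (b - a) / (2 * m))

section MirroredPieces

variable {a b : ℝ} {m j : ℕ}

theorem mirroredPieces_eq_Ioc_union_reflect (hab : a ≤ b) (hj : 1 ≤ j) (hjm : j ≤ m) :
    ∃ p r, a ≤ p ∧ p ≤ r ∧ 2 * r ≤ a + b ∧ r - p = (b - a) / (2 * m) ∧
      mirroredPieces a b m j = Ioc p r ∪ Ioc (a + b - r) (a + b - p) := by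
  have hm : (0 : ℝ) < m := by exact_mod_cast (hj.trans hjm)
  have hj' : (1 : ℝ) ≤ j := by exact_mod_cast hj
  have hjm' : (j : ℝ) ≤ m := by exact_mod_cast hjm
  refine ⟨a + ((j : ℝ) - 1) * (b - a) / (2 * m), a + (j : ℝ) * (b - a) / (2 * m), ?_, ?_, ?_, ?_, ?_⟩
  · have : 0 ≤ ((j : ℝ) - 1) * (b - a) / (2 * m) :=
      div_nonneg (mul_nonneg (by linarith) (by linarith)) (by positivity)
    linarith
  · gcongr
    linarith
  · have hle : (j : ℝ) * (b - a) / (2 * m) ≤ m * (b - a) / (2 * m) := by gcongr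
    have hhalf : (m : ℝ) * (b - a) / (2 * m) = (b - a) / 2 := by field_simp
    linarith
  · ring
  · unfold mirroredPieces
    congr 2 <;> field_simp <;> ring

theorem mirroredPieces_subset (hab : a ≤ b) (hj : 1 ≤ j) (hjm : j ≤ m) :
    mirroredPieces a b m j ⊆ Ioc a b := by
  obtain ⟨p, r, hp, hpr, hr, -, heq⟩ := mirroredPieces_eq_Ioc_union_reflect hab hj hjm
  exact heq ▸ Ioc_union_reflect_subset hp hpr hr

theorem setIntegral_mirroredPieces {f : ℝ → ℝ} {α β : ℝ} (hab : a ≤ b)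
    (hf : ∀ x ∈ Ioc a b, f x = α * x + β) (hfi : IntegrableOn f (Ioc a b))
    (hj : 1 ≤ j) (hjm : j ≤ m) :
    ∫ x in mirroredPieces a b m j, f x = 1 / m * ∫ x in Ioc a b, f x := by
  obtain ⟨p, r, hp, hpr, hr, hlen, heq⟩ := mirroredPieces_eq_Ioc_union_reflect hab hj hjm
  have hm : (m : ℝ) ≠ 0 := by exact_mod_cast (Nat.one_le_iff_ne_zero.mp (hj.trans hjm))
  rw [heq, setIntegral_Ioc_union_reflect_of_eqOn_affine hf hfi hp hpr hr, hlen,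
    setIntegral_Ioc_of_eqOn_affine hf le_rfl hab le_rfl]
  field_simp

end MirroredPieces

theorem setIntegral_iUnion_mirroredPieces {ι : Type*} [DecidableEq ι] {q : ℕ}
    {d : Fin (q + 1) → ℝ} (hd : Monotone d) {f : ℝ → ℝ}
    (hfi : IntegrableOn f (Icc (d 0) (d (Fin.last q))))
    (haff : ∀ t : Fin q, ∃ α β : ℝ, ∀ x ∈ Ioc (d t.castSucc) (d t.succ), f x = α * x + β)
    (N : Fin q → Finset ι) (rk : Fin q → ι → ℕ)
    (hrk : ∀ t, MapsTo (rk t) (N t : Set ι) (Icc 1 (N t).card)) (k : ι) :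
    ∫ x in ⋃ (t : Fin q) (_ : k ∈ N t),
        mirroredPieces (d t.castSucc) (d t.succ) (N t).card (rk t k), f x =
      ∑ t : Fin q, if k ∈ N t then
        1 / ((N t).card : ℝ) * ∫ x in Ioc (d t.castSucc) (d t.succ), f x else 0 := by
  let S t := if k ∈ N t then mirroredPieces (d t.castSucc) (d t.succ) (N t).card (rk t k) else ∅
  have hS : ∀ t, S t ⊆ Ioc (d t.castSucc) (d t.succ) := fun t => by
    by_cases hk : k ∈ N t
    · exact (if_pos hk).trans_subset
        (mirroredPieces_subset (hd t.castSucc_le_succ) (hrk t hk).1 (hrk t hk).2)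
    · exact (if_neg hk).trans_subset (empty_subset _)
  rw [iUnion_congr fun t => iUnion_eq_if _, integral_iUnion_fintype
    (fun t => by unfold S; split_ifs; exacts [measurableSet_Ioc.union measurableSet_Ioc, .empty])
    (fun t t' htt' => (hd.pairwise_disjoint_on_Ioc_castSucc_succ htt').mono (hS t) (hS t'))
    (fun t => hfi.mono_set ((hS t).trans (hd.Ioc_castSucc_succ_subset t)))]
  refine Finset.sum_congr rfl fun t _ => ?_
  by_cases hk : k ∈ N t
  · obtain ⟨α, β, hαβ⟩ := haff t
    simp only [S, if_pos hk]
    exact setIntegral_mirroredPieces (hd t.castSucc_le_succ) hαβ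
      (hfi.mono_set (hd.Ioc_castSucc_succ_subset t)) (hrk t hk).1 (hrk t hk).2
  · simp [S, hk]

theorem statement13_general {n q : ℕ}
    (v : Fin n → ℝ → ℝ)
    (hint : ∀ i, IntegrableOn (v i) (Set.Icc (0:ℝ) 1))
    (hnonneg : ∀ i x, 0 ≤ v i x)
    (d : Fin (q + 1) → ℝ) (hd : Monotone d) (hd0 : d 0 = 0) (hd1 : d (Fin.last q) = 1)
    (haff : ∀ (i : Fin n) (t : Fin q), ∃ α β : ℝ,
      ∀ x ∈ Set.Ioc (d t.castSucc) (d t.succ), v i x = α * x + β)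
    (N : Fin q → Finset (Fin n))
    (hN : ∀ t i, i ∈ N t ↔ 0 < ∫ x in Set.Ioc (d t.castSucc) (d t.succ), v i x)
    (rk : Fin q → Fin n → ℕ)
    (hrk : ∀ t, Set.BijOn (rk t) (↑(N t) : Set (Fin n)) (Set.Icc 1 (N t).card))
    (X : Fin n → Set ℝ)
    (hX : ∀ i, X i = ⋃ (t : Fin q) (_ : i ∈ N t),
      (Set.Ioc (d t.castSucc + ((rk t i : ℝ) - 1) * (d t.succ - d t.castSucc) / (2 * (N t).card))
               (d t.castSucc + (rk t i : ℝ) * (d t.succ - d t.castSucc) / (2 * (N t).card)) ∪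
       Set.Ioc (d t.castSucc + (2 * ((N t).card : ℝ) - rk t i) * (d t.succ - d t.castSucc) / (2 * (N t).card))
               (d t.castSucc + (2 * ((N t).card : ℝ) + 1 - rk t i) * (d t.succ - d t.castSucc) / (2 * (N t).card)))) :
    EnvyFreeA v X ∧
    (∀ i, pieceVal (v i) (X i) = ∑ t : Fin q,
      if i ∈ N t then (1 / ((N t).card : ℝ)) * ∫ x in Set.Ioc (d t.castSucc) (d t.succ), v i x
      else 0) := by
  have value : ∀ i k, pieceVal (v i) (X k) = ∑ t : Fin q, if k ∈ N t then
      1 / ((N t).card : ℝ) * ∫ x in Ioc (d t.castSucc) (d t.succ), v i x else 0 := fun i k => by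
    rw [pieceVal, hX k]
    exact setIntegral_iUnion_mirroredPieces hd (hd0 ▸ hd1 ▸ hint i) (haff i) N rk
      (fun t => (hrk t).mapsTo) k
  refine ⟨fun i k => ?_, fun i => value i i⟩
  rw [value i i, value i k]
  refine Finset.sum_le_sum fun t _ => ?_
  have hpos : 0 ≤ ∫ x in Ioc (d t.castSucc) (d t.succ), v i x :=
    setIntegral_nonneg measurableSet_Ioc fun x _ => hnonneg i x
  by_cases hi : i ∈ N t
  · simp only [if_pos hi]
    split_ifs
    · exact le_rfl
    · positivity
  · have hzero : ∫ x in Ioc (d t.castSucc) (d t.succ), v i x = 0 :=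
      le_antisymm (not_lt.mp ((hN t i).not.mp hi)) hpos
    simp [hi, hzero]

/-- Modified Wang-Wu: if [0,1] is cut into intervals on which every density is
affine, and each interval is split into 2·n_t equal pieces shared symmetrically
among the interested agents N_t, then the resulting allocation is envy-free and
each agent i gets exactly Σ_{t : i ∈ N_t} (1/n_t)·∫_{I_t} v_i. -/
theorem statement13 {n q : ℕ} (hn : 0 < n) (hq : 0 < q)
    (v : Fin n → ℝ → ℝ)
    (hmeas : ∀ i, Measurable (v i))
    (hint : ∀ i, IntegrableOn (v i) (Set.Icc (0:ℝ) 1))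
    (hnonneg : ∀ i x, 0 ≤ v i x)
    (hnorm : ∀ i, (∫ x in Set.Icc (0:ℝ) 1, v i x) = 1)
    (d : Fin (q + 1) → ℝ) (hd : Monotone d) (hd0 : d 0 = 0) (hd1 : d (Fin.last q) = 1)
    (haff : ∀ (i : Fin n) (t : Fin q), ∃ α β : ℝ,
      ∀ x ∈ Set.Ioc (d t.castSucc) (d t.succ), v i x = α * x + β)
    (N : Fin q → Finset (Fin n))
    (hN : ∀ t i, i ∈ N t ↔ 0 < ∫ x in Set.Ioc (d t.castSucc) (d t.succ), v i x)
    (rk : Fin q → Fin n → ℕ)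
    (hrk : ∀ t, Set.BijOn (rk t) (↑(N t) : Set (Fin n)) (Set.Icc 1 (N t).card))
    (X : Fin n → Set ℝ)
    (hX : ∀ i, X i = ⋃ (t : Fin q) (_ : i ∈ N t),
      (Set.Ioc (d t.castSucc + ((rk t i : ℝ) - 1) * (d t.succ - d t.castSucc) / (2 * (N t).card))
               (d t.castSucc + (rk t i : ℝ) * (d t.succ - d t.castSucc) / (2 * (N t).card)) ∪
       Set.Ioc (d t.castSucc + (2 * ((N t).card : ℝ) - rk t i) * (d t.succ - d t.castSucc) / (2 * (N t).card))
               (d t.castSucc + (2 * ((N t).card : ℝ) + 1 - rk t i) * (d t.succ - d t.castSucc) / (2 * (N t).card)))) :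
    EnvyFreeA v X ∧
    (∀ i, pieceVal (v i) (X i) = ∑ t : Fin q,
      if i ∈ N t then (1 / ((N t).card : ℝ)) * ∫ x in Set.Ioc (d t.castSucc) (d t.succ), v i x
      else 0) :=
  statement13_general v hint hnonneg d hd hd0 hd1 haff N hN rk hrk X hX
end
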